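/- Let Y be a symmetric real random variable with smooth probability density, ‖Y‖_{L²}² = E[Y²] = 1 and E[Y⁴] = 3, and suppose its density η can be written as η(x) = ∫_0^∞ e^{−t x²} μ(dt) for a positive Borel measure μ on [0,∞). Then Y is standard normal, i.e. η(x) = (1/√(2π)) e^{−x²/2}. -/

import Mathlib

open MeasureTheory Real Set
open scoped ENNReal

/-!
Tonelli turns each even moment of `η` into an integral over `μ` of the corresponding Gaussian
moment `Γ(k + 1/2) t^{-(k + 1/2)}`; finiteness of `∫ η` forces `μ` to live on `t > 0`. With
respect to the probability measure `√(π/t) μ(dt)`, the moment conditions say that `1/(2t)` has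
mean `1` and second moment `1`, so it has zero variance: `μ` is a point mass at `t = 1/2`, and
`∫ η = 1` fixes its weight.
-/

noncomputable def gaussEvenMoment (k : ℕ) (b : ℝ) : ℝ :=
  Gamma (k + 1 / 2) * b ^ (-(k + 1 / 2 : ℝ))

lemma gaussEvenMoment_succ (k : ℕ) {b : ℝ} (hb : 0 < b) :
    gaussEvenMoment (k + 1) b = (k + 1 / 2) / b * gaussEvenMoment k b := by
  have hΓ : Gamma ((k + 1 : ℕ) + 1 / 2) = (k + 1 / 2) * Gamma (k + 1 / 2) := by
    rw [← Gamma_add_one (by positivity)]; push_cast; ring_nf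
  have hpow : b ^ (-((k + 1 : ℕ) + 1 / 2 : ℝ)) = b ^ (-(k + 1 / 2 : ℝ)) / b := by
    rw [← rpow_sub_one hb.ne']; push_cast; ring_nf
  rw [gaussEvenMoment, gaussEvenMoment, hΓ, hpow]
  ring

lemma gaussEvenMoment_pos (k : ℕ) {b : ℝ} (hb : 0 < b) : 0 < gaussEvenMoment k b :=
  mul_pos (Gamma_pos_of_pos (by positivity)) (rpow_pos_of_pos hb _)

lemma integrable_pow_mul_exp_neg_mul_sq (n : ℕ) {b : ℝ} (hb : 0 < b) :
    Integrable fun x : ℝ => x ^ n * exp (-b * x ^ 2) := by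
  simpa only [rpow_natCast] using
    integrable_rpow_mul_exp_neg_mul_sq hb (s := n) (by linarith [n.cast_nonneg (α := ℝ)])

lemma integral_pow_two_mul_mul_exp_neg_mul_sq (k : ℕ) {b : ℝ} (hb : 0 < b) :
    ∫ x : ℝ, x ^ (2 * k) * exp (-b * x ^ 2) = gaussEvenMoment k b := by
  have heven : ∀ x : ℝ, x ^ (2 * k) * exp (-b * x ^ 2)
      = |x| ^ (2 * k : ℝ) * exp (-b * |x| ^ (2 : ℝ)) := fun x => by
    rw [rpow_two, sq_abs, show (2 * k : ℝ) = ((2 * k : ℕ) : ℝ) by push_cast; ring, rpow_natCast,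
      pow_abs, abs_of_nonneg ((even_two_mul k).pow_nonneg x)]
  simp_rw [heven]
  rw [integral_comp_abs (f := fun x => x ^ (2 * k : ℝ) * exp (-b * x ^ (2 : ℝ))),
    integral_rpow_mul_exp_neg_mul_rpow two_pos (by linarith [k.cast_nonneg (α := ℝ)]) hb,
    gaussEvenMoment, show (2 * k + 1 : ℝ) / 2 = k + 1 / 2 by ring,
    show -(2 * k + 1 : ℝ) / 2 = -(k + 1 / 2) by ring]
  ring

lemma ae_mul_sub_one_sq_eq_zero_of_integral_mul_eq {α : Type*} [MeasurableSpace α]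
    {ν : Measure α} {g f : α → ℝ} (hg : 0 ≤ᵐ[ν] g) (hg0 : Integrable g ν)
    (hg1 : Integrable (fun a => g a * f a) ν) (hg2 : Integrable (fun a => g a * f a ^ 2) ν)
    (h1 : ∫ a, g a * f a ∂ν = ∫ a, g a ∂ν) (h2 : ∫ a, g a * f a ^ 2 ∂ν = ∫ a, g a ∂ν) :
    ∀ᵐ a ∂ν, g a * (f a - 1) ^ 2 = 0 := by
  have hexpand : (fun a => g a * (f a - 1) ^ 2)
      = fun a => g a * f a ^ 2 - 2 * (g a * f a) + g a := by
    ext a; ring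
  have hg21 : Integrable (fun a => g a * f a ^ 2 - 2 * (g a * f a)) ν :=
    hg2.sub (hg1.const_mul 2)
  have hzero : ∫ a, g a * (f a - 1) ^ 2 ∂ν = 0 := by
    rw [hexpand, integral_add hg21 hg0, integral_sub hg2 (hg1.const_mul 2), integral_const_mul,
      h1, h2]
    ring
  refine (integral_eq_zero_iff_of_nonneg_ae (hg.mono fun a ha => ?_) ?_).1 hzero
  · exact mul_nonneg ha (sq_nonneg _)
  · exact hexpand ▸ hg21.add hg0

noncomputable def gaussMixture (μ : Measure ℝ) (x : ℝ) : ℝ := ∫ t, exp (-t * x ^ 2) ∂μ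

lemma gaussMixture_nonneg (μ : Measure ℝ) (x : ℝ) : 0 ≤ gaussMixture μ x :=
  integral_nonneg fun _ => (exp_pos _).le

section Mixture

variable {μ : Measure ℝ} [IsFiniteMeasure μ]

lemma integrable_exp_neg_mul_sq_of_ae_nonneg (hμ : ∀ᵐ t ∂μ, 0 ≤ t) (x : ℝ) :
    Integrable (fun t => exp (-t * x ^ 2)) μ := by
  refine (integrable_const 1).mono' (by fun_prop) ?_
  filter_upwards [hμ] with t ht
  rw [norm_of_nonneg (exp_pos _).le, exp_le_one_iff]
  nlinarith [sq_nonneg x]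

lemma lintegral_mul_gaussMixture (hμ : ∀ᵐ t ∂μ, 0 ≤ t) {w : ℝ → ℝ≥0∞} (hw : Measurable w) :
    ∫⁻ x, w x * ENNReal.ofReal (gaussMixture μ x)
      = ∫⁻ t, (∫⁻ x, w x * ENNReal.ofReal (exp (-t * x ^ 2))) ∂μ := by
  have hmeas : Measurable fun p : ℝ × ℝ => ENNReal.ofReal (exp (-p.2 * p.1 ^ 2)) := by
    fun_prop
  have hinner (x : ℝ) : w x * ENNReal.ofReal (gaussMixture μ x)
      = ∫⁻ t, w x * ENNReal.ofReal (exp (-t * x ^ 2)) ∂μ := by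
    rw [gaussMixture, ofReal_integral_eq_lintegral_ofReal
      (integrable_exp_neg_mul_sq_of_ae_nonneg hμ x) (.of_forall fun _ => (exp_pos _).le),
      lintegral_const_mul _ (by fun_prop)]
  simp_rw [hinner]
  refine lintegral_lintegral_swap (μ := (volume : Measure ℝ)) (ν := μ) ?_
  exact ((hw.comp measurable_fst).mul hmeas).aemeasurable

lemma lintegral_exp_neg_mul_sq_of_nonpos {t : ℝ} (ht : t ≤ 0) :
    ∫⁻ x : ℝ, ENNReal.ofReal (exp (-t * x ^ 2)) = ⊤ := by
  refine eq_top_mono (lintegral_mono fun x => ?_) (by simp : ∫⁻ _ : ℝ, (1 : ℝ≥0∞) = ⊤)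
  rw [← ENNReal.ofReal_one]
  exact ENNReal.ofReal_le_ofReal (one_le_exp (by nlinarith [sq_nonneg x]))

lemma ae_pos_of_integrable_gaussMixture (hμ : ∀ᵐ t ∂μ, 0 ≤ t)
    (h : Integrable (gaussMixture μ)) : ∀ᵐ t ∂μ, 0 < t := by
  have hfin : ∫⁻ t, (∫⁻ x : ℝ, ENNReal.ofReal (exp (-t * x ^ 2))) ∂μ ≠ ⊤ := by
    have := lintegral_mul_gaussMixture hμ (w := 1) measurable_const
    simp only [Pi.one_apply, one_mul] at this
    exact this ▸ h.lintegral_lt_top.ne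
  refine ae_iff.2 ?_
  simp only [not_lt]
  change μ (Iic 0) = 0
  by_contra hne
  refine hfin (eq_top_mono (setLIntegral_le_lintegral (Iic 0) _) ?_)
  rw [setLIntegral_congr_fun measurableSet_Iic fun t ht => lintegral_exp_neg_mul_sq_of_nonpos ht,
    setLIntegral_const, ENNReal.top_mul hne]

lemma integral_pow_two_mul_mul_gaussMixture (hpos : ∀ᵐ t ∂μ, 0 < t) (k : ℕ)
    (h : Integrable fun x => x ^ (2 * k) * gaussMixture μ x) :
    Integrable (gaussEvenMoment k) μ ∧
      ∫ x, x ^ (2 * k) * gaussMixture μ x = ∫ t, gaussEvenMoment k t ∂μ := by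
  have hx (x : ℝ) : 0 ≤ x ^ (2 * k) := (even_two_mul k).pow_nonneg x
  have hlin : ∫⁻ x, ENNReal.ofReal (x ^ (2 * k) * gaussMixture μ x)
      = ∫⁻ t, ENNReal.ofReal (gaussEvenMoment k t) ∂μ := by
    simp_rw [ENNReal.ofReal_mul (hx _)]
    rw [lintegral_mul_gaussMixture (hpos.mono fun _ => le_of_lt) (by fun_prop)]
    refine lintegral_congr_ae (hpos.mono fun t ht => ?_)
    dsimp only
    rw [← integral_pow_two_mul_mul_exp_neg_mul_sq k ht, ofReal_integral_eq_lintegral_ofReal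
      (integrable_pow_mul_exp_neg_mul_sq _ ht)
      (.of_forall fun x => mul_nonneg (hx x) (exp_pos _).le)]
    simp_rw [ENNReal.ofReal_mul (hx _)]
  have hG : 0 ≤ᵐ[μ] gaussEvenMoment k := hpos.mono fun t ht => (gaussEvenMoment_pos k ht).le
  have hGm : AEStronglyMeasurable (gaussEvenMoment k) μ := by
    unfold gaussEvenMoment; fun_prop
  refine ⟨⟨hGm, (hasFiniteIntegral_iff_ofReal hG).2 (hlin ▸ h.lintegral_lt_top)⟩, ?_⟩
  rw [integral_eq_lintegral_of_nonneg_ae (.of_forall fun x => ?_) h.1,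
    integral_eq_lintegral_of_nonneg_ae hG hGm, hlin]
  exact mul_nonneg (hx x) (gaussMixture_nonneg μ x)

end Mixture

lemma ae_eq_half_of_integral_gaussEvenMoment {μ : Measure ℝ} (hpos : ∀ᵐ t ∂μ, 0 < t)
    (hi0 : Integrable (gaussEvenMoment 0) μ) (hi1 : Integrable (gaussEvenMoment 1) μ)
    (hi2 : Integrable (gaussEvenMoment 2) μ) (h0 : ∫ t, gaussEvenMoment 0 t ∂μ = 1)
    (h1 : ∫ t, gaussEvenMoment 1 t ∂μ = 1) (h2 : ∫ t, gaussEvenMoment 2 t ∂μ = 3) :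
    ∀ᵐ t ∂μ, t = 1 / 2 := by
  -- `gaussEvenMoment 0 t = √(π/t)` is the density of the normalised mixing measure.
  have hM1 : gaussEvenMoment 1 =ᵐ[μ] fun t => gaussEvenMoment 0 t * (2 * t)⁻¹ :=
    hpos.mono fun t ht => by rw [gaussEvenMoment_succ 0 ht]; field_simp; ring
  have hM2 : (fun t => gaussEvenMoment 2 t / 3) =ᵐ[μ]
      fun t => gaussEvenMoment 0 t * (2 * t)⁻¹ ^ 2 :=
    hpos.mono fun t ht => by
      change gaussEvenMoment (1 + 1) t / 3 = _
      rw [gaussEvenMoment_succ 1 ht, gaussEvenMoment_succ 0 ht]; field_simp; ring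
  have hvar := ae_mul_sub_one_sq_eq_zero_of_integral_mul_eq
    (hpos.mono fun t ht => (gaussEvenMoment_pos 0 ht).le) hi0 (hi1.congr hM1)
    ((hi2.div_const 3).congr hM2) (by rw [← integral_congr_ae hM1, h0, h1])
    (by rw [← integral_congr_ae hM2, integral_div, h0, h2]; norm_num)
  filter_upwards [hvar, hpos] with t hvar ht
  have h := pow_eq_zero_iff two_ne_zero |>.1 <|
    (mul_eq_zero.1 hvar).resolve_left (gaussEvenMoment_pos 0 ht).ne'
  rw [sub_eq_zero, inv_eq_one] at h
  linarith

theorem stmt_9 (μ : Measure ℝ) [IsFiniteMeasure μ] (hsupp : μ (Set.Iio 0) = 0)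
    (η : ℝ → ℝ) (hrep : ∀ x : ℝ, η x = ∫ t, Real.exp (-t * x ^ 2) ∂μ)
    (hprob : ∫ x, η x = 1)
    (h2 : ∫ x, x ^ 2 * η x = 1)
    (h4 : ∫ x, x ^ 4 * η x = 3) :
    ∀ x : ℝ, η x = (Real.sqrt (2 * Real.pi))⁻¹ * Real.exp (-x ^ 2 / 2) := by
  obtain rfl : η = gaussMixture μ := funext hrep
  have hμ : ∀ᵐ t ∂μ, 0 ≤ t := ae_iff.2 (by simp only [not_le]; exact hsupp)
  have hpos := ae_pos_of_integrable_gaussMixture hμ (.of_integral_ne_zero (by simp [hprob]))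
  have hmoment (k : ℕ) (m : ℝ) (hm : ∫ x, x ^ (2 * k) * gaussMixture μ x = m) (hm0 : m ≠ 0) :=
    integral_pow_two_mul_mul_gaussMixture hpos k (.of_integral_ne_zero (hm ▸ hm0))
  obtain ⟨hi0, hm0⟩ := hmoment 0 1 (by simpa using hprob) one_ne_zero
  obtain ⟨hi1, hm1⟩ := hmoment 1 1 h2 one_ne_zero
  obtain ⟨hi2, hm2⟩ := hmoment 2 3 h4 three_ne_zero
  have hhalf := ae_eq_half_of_integral_gaussEvenMoment hpos hi0 hi1 hi2
    (hm0 ▸ by simpa using hprob) (hm1 ▸ h2) (hm2 ▸ h4)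
  have hgauss : gaussMixture μ = fun x => μ.real univ * exp (-(1 / 2) * x ^ 2) :=
    funext fun x => by
      rw [gaussMixture, integral_congr_ae (g := fun _ => exp (-(1 / 2) * x ^ 2))
        (hhalf.mono fun t ht => by rw [ht]), integral_const, smul_eq_mul]
  have hmass : μ.real univ * √(2 * π) = 1 := by
    rw [← hprob, hgauss, integral_const_mul, integral_gaussian, show π / (1 / 2) = 2 * π by ring]
  intro x
  rw [hgauss, eq_inv_of_mul_eq_one_left hmass]
  ring_nf
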